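/- Let d ≥ 1 and define p : ℝ^d × (0,∞) → ℝ by p(x₁,...,x_d,t) = (2/π) ∫₀^∞ (∏_{j=1}^{d} exp(−x_j²/(2s))/√(2πs)) · (t/(t²+s²)) ds. Then for every (x₁,...,x_d) ≠ 0 and t > 0, p satisfies ∂²p/∂t² = −(1/4) (∑_{j=1}^{d} ∂²/∂x_j²)² p, i.e. the biharmonic operator applied to p equals −4 ∂²p/∂t². -/

import Mathlib

open Real MeasureTheory

/-- Laplacian of a function on `ℝ^d`, as the sum of second coordinatewise derivatives. -/
noncomputable def laplacian {d : ℕ} (f : (Fin d → ℝ) → ℝ) (x : Fin d → ℝ) : ℝ :=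
  ∑ j : Fin d, iteratedDeriv 2 (fun h => f (Function.update x j h)) (x j)

/-- Joint density of the vector process `(B₁(|C(t)|), ..., B_d(|C(t)|))`. -/
noncomputable def bmCauchyDensityVec (d : ℕ) (x : Fin d → ℝ) (t : ℝ) : ℝ :=
  (2 / π) * ∫ s in Set.Ioi (0 : ℝ),
    (∏ j : Fin d, Real.exp (-(x j) ^ 2 / (2 * s)) / Real.sqrt (2 * π * s)) *
      (t / (t ^ 2 + s ^ 2))

/-! Write `q = |x|²` and `β = d / 2`. Up to a constant, `p(x, t) = ∫₀^∞ G(q, s) P(t, s) ds` with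
the heat kernel `G(q, s) = s^(-β) exp(-q / (2s))` and `P(t, s) = t / (t² + s²)`. The heat kernel
solves `Δₓ G = 2 ∂ₛ G`, hence `Δₓ² G = 4 ∂ₛ² G`, while `P` is harmonic in `(t, s)`, so
`∂ₜ² P = -∂ₛ² P`. Differentiating under the integral sign and integrating by parts twice in `s`
gives `Δ² p = 4 ∫ (∂ₛ² G) P = 4 ∫ G ∂ₛ² P = -4 ∫ G ∂ₜ² P = -4 ∂ₜ² p`; the boundary terms vanish
at `s = 0` because `q > 0`, and at `s = ∞` because `β > 0`. The Laplacians are computed with the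
radial formula `Δ φ(|x|²) = 2d φ' + 4|x|² φ''` and `∂_q G_β = -G_{β+1} / 2`. -/

open Set Filter Metric Topology

lemma integral_Ioi_eq_sub_of_hasDerivAt_of_tendsto_nhdsGT {f f' : ℝ → ℝ} {a m₀ m : ℝ}
    (hderiv : ∀ x ∈ Ioi a, HasDerivAt f (f' x) x) (hint : IntegrableOn f' (Ioi a))
    (h₀ : Tendsto f (𝓝[>] a) (𝓝 m₀)) (h_top : Tendsto f atTop (𝓝 m)) :
    ∫ x in Ioi a, f' x = m - m₀ := by
  simpa using integral_Ioi_deriv_mul_eq_sub (v := fun _ => 1) (v' := fun _ => 0) hderiv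
    (fun x _ => hasDerivAt_const x 1) (by simpa [Pi.mul_def, Pi.add_def] using hint)
    (by simpa [Pi.mul_def] using h₀) (by simpa [Pi.mul_def] using h_top)

lemma tendsto_atTop_zero_of_abs_le {f : ℝ → ℝ} {C : ℝ}
    (hf : ∀ s, |f s| ≤ C * (1 + s ^ 2)⁻¹) : Tendsto f atTop (𝓝 0) := by
  refine squeeze_zero_norm hf ?_
  simpa using (tendsto_inv_atTop_zero.comp
    (tendsto_atTop_add_const_left _ 1 (tendsto_pow_atTop two_ne_zero))).const_mul C

lemma iteratedDeriv_two_eq_of_hasDerivAt {f f' : ℝ → ℝ} {x f'' : ℝ}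
    (h₁ : ∀ᶠ y in 𝓝 x, HasDerivAt f (f' y) y) (h₂ : HasDerivAt f' f'' x) :
    iteratedDeriv 2 f x = f'' := by
  have hderiv : deriv f =ᶠ[𝓝 x] f' := h₁.mono fun y hy => hy.deriv
  rw [iteratedDeriv_succ, iteratedDeriv_one, hderiv.deriv_eq, h₂.deriv]

lemma laplacian_congr {d : ℕ} {f g : (Fin d → ℝ) → ℝ} {x : Fin d → ℝ} (h : f =ᶠ[𝓝 x] g) :
    laplacian f x = laplacian g x := by
  refine Finset.sum_congr rfl fun j _ => Filter.EventuallyEq.iteratedDeriv_eq 2 ?_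
  have hupdate : Tendsto (fun h : ℝ => Function.update x j h) (𝓝 (x j)) (𝓝 x) := by
    simpa using (continuous_const.update j continuous_id :
      Continuous fun h : ℝ => Function.update x j h).tendsto (x j)
  exact hupdate.eventually h

lemma sum_sq_update {d : ℕ} (x : Fin d → ℝ) (j : Fin d) (h : ℝ) :
    ∑ i, Function.update x j h i ^ 2 = ∑ i, x i ^ 2 - x j ^ 2 + h ^ 2 := by
  rw [← Finset.add_sum_erase _ _ (Finset.mem_univ j),
    ← Finset.add_sum_erase _ _ (Finset.mem_univ j), Finset.sum_congr rfl fun i hi => by rw [Function.update_of_ne (Finset.ne_of_mem_erase hi)],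
    Function.update_self]
  ring

lemma eventually_sum_sq_pos {d : ℕ} {x : Fin d → ℝ} (hx : 0 < ∑ j, x j ^ 2) :
    ∀ᶠ y in 𝓝 x, 0 < ∑ j, y j ^ 2 :=
  (isOpen_lt continuous_const (by fun_prop)).mem_nhds hx

lemma laplacian_comp_sum_sq {d : ℕ} {φ φ' φ'' : ℝ → ℝ}
    (h₁ : ∀ r, 0 < r → HasDerivAt φ (φ' r) r) (h₂ : ∀ r, 0 < r → HasDerivAt φ' (φ'' r) r)
    {x : Fin d → ℝ} (hx : 0 < ∑ j, x j ^ 2) :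
    laplacian (fun z => φ (∑ j, z j ^ 2)) x
      = 2 * d * φ' (∑ j, x j ^ 2) + 4 * (∑ j, x j ^ 2) * φ'' (∑ j, x j ^ 2) := by
  have hcoord : ∀ j, iteratedDeriv 2 (fun h => φ (∑ i, Function.update x j h i ^ 2)) (x j)
      = 2 * φ' (∑ j, x j ^ 2) + 4 * x j ^ 2 * φ'' (∑ j, x j ^ 2) := by
    intro j
    obtain ⟨c, hc'⟩ : ∃ c, c = ∑ i, x i ^ 2 - x j ^ 2 := ⟨_, rfl⟩
    have hc : c + x j ^ 2 = ∑ i, x i ^ 2 := by rw [hc']; ring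
    have hfun : (fun h => φ (∑ i, Function.update x j h i ^ 2)) = fun h => φ (c + h ^ 2) := by
      funext h; rw [sum_sq_update, hc']
    have hin : ∀ y, HasDerivAt (fun h => c + h ^ 2) (2 * y) y := fun y => by
      simpa using (hasDerivAt_pow 2 y).const_add c
    have hpos : ∀ᶠ y in 𝓝 (x j), 0 < c + y ^ 2 :=
      (isOpen_lt continuous_const (by fun_prop)).mem_nhds (by rw [Set.mem_ofPred_eq, hc]; exact hx)
    rw [hfun, iteratedDeriv_two_eq_of_hasDerivAt (f := fun h => φ (c + h ^ 2))
      (f' := fun y => φ' (c + y ^ 2) * (2 * y))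
      (hpos.mono fun y hy => (h₁ _ hy).comp y (hin y))
      (((h₂ _ (hc ▸ hx)).comp _ (hin _)).mul ((hasDerivAt_id _).const_mul 2))]
    simp only [Function.comp_apply, hc]
    ring
  simp only [laplacian, hcoord, Finset.sum_add_distrib, ← Finset.sum_mul, ← Finset.mul_sum,
    Finset.sum_const, Finset.card_univ, Fintype.card_fin, nsmul_eq_mul]
  ring

lemma laplacian_laplacian_comp_sum_sq {d : ℕ} {φ : ℕ → ℝ → ℝ}
    (hφ : ∀ k < 4, ∀ r, 0 < r → HasDerivAt (φ k) (φ (k + 1) r) r)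
    {x : Fin d → ℝ} (hx : 0 < ∑ j, x j ^ 2) :
    laplacian (fun y => laplacian (fun z => φ 0 (∑ j, z j ^ 2)) y) x
      = 4 * d * (d + 2) * φ 2 (∑ j, x j ^ 2) + 16 * (d + 2) * (∑ j, x j ^ 2) * φ 3 (∑ j, x j ^ 2)
        + 16 * (∑ j, x j ^ 2) ^ 2 * φ 4 (∑ j, x j ^ 2) := by
  rw [laplacian_congr ((eventually_sum_sq_pos hx).mono fun y hy =>
    laplacian_comp_sum_sq (φ' := φ 1) (φ'' := φ 2) (hφ 0 (by norm_num)) (hφ 1 (by norm_num)) hy)]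
  rw [laplacian_comp_sum_sq (φ := fun r => 2 * d * φ 1 r + 4 * r * φ 2 r)
    (φ' := fun r => 2 * d * φ 2 r + (4 * φ 2 r + 4 * r * φ 3 r))
    (φ'' := fun r => 2 * d * φ 3 r + (4 * φ 3 r + (4 * φ 3 r + 4 * r * φ 4 r))) _ _ hx]
  · ring
  · intro r hr
    exact ((hφ 1 (by norm_num) r hr).const_mul _).add
      (((hasDerivAt_id r).const_mul 4).mul (hφ 2 (by norm_num) r hr)) |>.congr_deriv (by simp)
  · intro r hr
    exact ((hφ 2 (by norm_num) r hr).const_mul _).add ((hφ 2 (by norm_num) r hr).const_mul 4 |>.add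
      (((hasDerivAt_id r).const_mul 4).mul (hφ 3 (by norm_num) r hr))) |>.congr_deriv (by simp)

-- With `q = |x|²` and `β = d / 2`, `(2π)^(-β) * heatKernel β q s` is the density of a standard
-- Brownian motion in `ℝ^d` at time `s`.
noncomputable def heatKernel (β q s : ℝ) : ℝ := exp (-q / (2 * s)) * s ^ (-β)

section HeatKernel

variable {β q s : ℝ}

lemma heatKernel_pos (hs : 0 < s) : 0 < heatKernel β q s := by
  unfold heatKernel; positivity

lemma hasDerivAt_heatKernel_q (hs : 0 < s) :
    HasDerivAt (fun r => heatKernel β r s) (-(1 / 2) * heatKernel (β + 1) q s) q := by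
  have h := ((((hasDerivAt_neg q).div_const (2 * s)).exp).mul_const (s ^ (-β)))
  refine h.congr_deriv ?_
  rw [heatKernel, neg_add, rpow_add hs, rpow_neg_one]
  field_simp

/-- The heat equation `∂ₛ G = ½ Δₓ G`, written in the variables `q = |x|²`, `β = d / 2`. -/
lemma hasDerivAt_heatKernel_s (hs : 0 < s) :
    HasDerivAt (heatKernel β q)
      (q / 2 * heatKernel (β + 2) q s - β * heatKernel (β + 1) q s) s := by
  have h := (((hasDerivAt_inv hs.ne').const_mul (-q / 2)).exp).mul
    (hasDerivAt_rpow_const (p := -β) (Or.inl hs.ne'))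
  have hfun : heatKernel β q = fun u => exp (-q / 2 * u⁻¹) * u ^ (-β) := by
    funext u; rw [heatKernel]; ring_nf
  rw [hfun]
  refine h.congr_deriv ?_
  have e2 : s ^ (-(2 : ℝ)) = (s ^ 2)⁻¹ := by rw [rpow_neg hs.le, rpow_two]
  rw [heatKernel, heatKernel, neg_add, rpow_add hs, neg_add, rpow_add hs, rpow_sub_one hs.ne',
    rpow_neg_one, e2, show -q / (2 * s) = -q / 2 * s⁻¹ by ring]
  field_simp
  ring

lemma hasDerivAt_heatKernel_s_deriv (hs : 0 < s) :
    HasDerivAt (fun u => q / 2 * heatKernel (β + 2) q u - β * heatKernel (β + 1) q u)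
      (q ^ 2 / 4 * heatKernel (β + 4) q s - q * (β + 1) * heatKernel (β + 3) q s
        + β * (β + 1) * heatKernel (β + 2) q s) s := by
  refine ((hasDerivAt_heatKernel_s hs).const_mul (q / 2) |>.sub
    ((hasDerivAt_heatKernel_s hs).const_mul β)).congr_deriv ?_
  ring_nf

lemma measurable_heatKernel : Measurable (heatKernel β q) := by
  unfold heatKernel; fun_prop

lemma heatKernel_le_of_le_q {r : ℝ} (hs : 0 < s) (hqr : q ≤ r) :
    heatKernel β r s ≤ heatKernel β q s := by
  unfold heatKernel
  gcongr

lemma heatKernel_le_rpow_neg (hq : 0 ≤ q) (hs : 0 < s) : heatKernel β q s ≤ s ^ (-β) := by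
  unfold heatKernel
  exact mul_le_of_le_one_left (by positivity)
    (exp_le_one_iff.2 (div_nonpos_of_nonpos_of_nonneg (neg_nonpos.2 hq) (by positivity)))

lemma tendsto_heatKernel_nhdsGT_zero (hq : 0 < q) : Tendsto (heatKernel β q) (𝓝[>] 0) (𝓝 0) := by
  have h := (tendsto_rpow_mul_exp_neg_mul_atTop_nhds_zero β (q / 2) (by positivity)).comp
    tendsto_inv_nhdsGT_zero
  refine h.congr' ?_
  filter_upwards [self_mem_nhdsWithin] with s (hs : 0 < s)
  simp only [Function.comp_apply, heatKernel, inv_rpow hs.le, rpow_neg hs.le]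
  ring_nf

lemma tendsto_heatKernel_atTop (hβ : 0 < β) : Tendsto (heatKernel β q) atTop (𝓝 0) := by
  have hexp : Tendsto (fun s : ℝ => exp (-q / (2 * s))) atTop (𝓝 1) := by
    simpa using ((tendsto_const_nhds (x := -q)).div_atTop
      (tendsto_id.const_mul_atTop two_pos)).rexp
  unfold heatKernel
  simpa using hexp.mul (tendsto_rpow_neg_atTop hβ)

lemma exists_heatKernel_le (hq : 0 < q) (hβ : 0 ≤ β) :
    ∃ C, ∀ s ∈ Ioi (0 : ℝ), heatKernel β q s ≤ C := by
  obtain ⟨δ, hδ, hsmall⟩ := (nhdsGT_basis (0 : ℝ)).eventually_iff.1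
    ((tendsto_heatKernel_nhdsGT_zero (β := β) hq).eventually (gt_mem_nhds one_pos))
  refine ⟨max 1 (δ ^ (-β)), fun s (hs : 0 < s) => ?_⟩
  rcases lt_or_ge s δ with hsδ | hδs
  · exact (hsmall ⟨hs, hsδ⟩).le.trans (le_max_left _ _)
  · exact (heatKernel_le_rpow_neg hq.le hs).trans <|
      (rpow_le_rpow_of_nonpos hδ hδs (neg_nonpos.2 hβ)).trans (le_max_right _ _)

end HeatKernel

-- `π` times the Cauchy density; `cauchyKernel'` and `cauchyKernel''` are its `t`-derivatives.
noncomputable def cauchyKernel (t s : ℝ) : ℝ := t / (t ^ 2 + s ^ 2)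

noncomputable def cauchyKernel' (t s : ℝ) : ℝ := (s ^ 2 - t ^ 2) / (t ^ 2 + s ^ 2) ^ 2

noncomputable def cauchyKernel'' (t s : ℝ) : ℝ := 2 * t * (t ^ 2 - 3 * s ^ 2) / (t ^ 2 + s ^ 2) ^ 3

lemma measurable_cauchyKernel (t : ℝ) : Measurable (cauchyKernel t) := by
  unfold cauchyKernel; fun_prop

lemma measurable_cauchyKernel' (t : ℝ) : Measurable (cauchyKernel' t) := by
  unfold cauchyKernel'; fun_prop

lemma measurable_cauchyKernel'' (t : ℝ) : Measurable (cauchyKernel'' t) := by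
  unfold cauchyKernel''; fun_prop

section CauchyKernel

variable {t s : ℝ}

lemma hasDerivAt_cauchyKernel_t (h : t ^ 2 + s ^ 2 ≠ 0) :
    HasDerivAt (fun τ => cauchyKernel τ s) (cauchyKernel' t s) t := by
  refine ((hasDerivAt_id' t).div ((hasDerivAt_pow 2 t).add_const (s ^ 2)) h).congr_deriv ?_
  rw [cauchyKernel']
  field_simp
  ring

lemma hasDerivAt_cauchyKernel'_t (h : t ^ 2 + s ^ 2 ≠ 0) :
    HasDerivAt (fun τ => cauchyKernel' τ s) (cauchyKernel'' t s) t := by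
  have hden : HasDerivAt (fun τ => (τ ^ 2 + s ^ 2) ^ 2) (2 * (t ^ 2 + s ^ 2) * (2 * t)) t := by
    simpa using ((hasDerivAt_pow 2 t).add_const (s ^ 2)).fun_pow 2
  refine (((hasDerivAt_pow 2 t).const_sub (s ^ 2)).div hden (pow_ne_zero 2 h)).congr_deriv ?_
  rw [cauchyKernel'']
  field_simp
  ring

lemma hasDerivAt_cauchyKernel_s (h : t ^ 2 + s ^ 2 ≠ 0) :
    HasDerivAt (cauchyKernel t) (-2 * t * s / (t ^ 2 + s ^ 2) ^ 2) s := by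
  refine ((hasDerivAt_const s t).div ((hasDerivAt_pow 2 s).const_add (t ^ 2)) h).congr_deriv ?_
  field_simp
  ring

/-- The kernel is harmonic: `∂²ₛ P = -∂²ₜ P`. -/
lemma hasDerivAt_cauchyKernel_s_deriv (h : t ^ 2 + s ^ 2 ≠ 0) :
    HasDerivAt (fun u => -2 * t * u / (t ^ 2 + u ^ 2) ^ 2) (-cauchyKernel'' t s) s := by
  have hden : HasDerivAt (fun u => (t ^ 2 + u ^ 2) ^ 2) (2 * (t ^ 2 + s ^ 2) * (2 * s)) s := by
    simpa using ((hasDerivAt_pow 2 s).const_add (t ^ 2)).fun_pow 2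
  refine (((hasDerivAt_id' s).const_mul (-2 * t)).div hden (pow_ne_zero 2 h)).congr_deriv ?_
  rw [cauchyKernel'']
  field_simp
  ring


lemma abs_cauchyKernel'_le (ht : 0 < t) : |cauchyKernel' t s| ≤ (t ^ 2 + s ^ 2)⁻¹ :=
  calc |cauchyKernel' t s| = |s ^ 2 - t ^ 2| / (t ^ 2 + s ^ 2) ^ 2 := by
        rw [cauchyKernel', abs_div, abs_of_pos (by positivity : (0 : ℝ) < (t ^ 2 + s ^ 2) ^ 2)]
    _ ≤ (t ^ 2 + s ^ 2) / (t ^ 2 + s ^ 2) ^ 2 := by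
        gcongr; exact abs_le.2 ⟨by nlinarith, by nlinarith⟩
    _ = (t ^ 2 + s ^ 2)⁻¹ := by field_simp

lemma abs_cauchyKernel''_le (ht : 0 < t) : |cauchyKernel'' t s| ≤ 6 / t * (t ^ 2 + s ^ 2)⁻¹ :=
  calc |cauchyKernel'' t s| = 2 * t * |t ^ 2 - 3 * s ^ 2| / (t ^ 2 + s ^ 2) ^ 3 := by
        rw [cauchyKernel'', abs_div, abs_mul, abs_of_pos (by positivity : 0 < 2 * t),
          abs_of_pos (by positivity : 0 < (t ^ 2 + s ^ 2) ^ 3)]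
    _ ≤ 2 * t * (3 * (t ^ 2 + s ^ 2)) / (t ^ 2 + s ^ 2) ^ 3 := by
        gcongr; exact abs_le.2 ⟨by nlinarith, by nlinarith⟩
    _ = 6 / t * (t ^ 2 / (t ^ 2 + s ^ 2)) * (t ^ 2 + s ^ 2)⁻¹ := by field_simp; norm_num
    _ ≤ 6 / t * 1 * (t ^ 2 + s ^ 2)⁻¹ := by
        gcongr; exact div_le_one_of_le₀ (by nlinarith) (by positivity)
    _ = 6 / t * (t ^ 2 + s ^ 2)⁻¹ := by ring

lemma abs_deriv_cauchyKernel_s_le (ht : 0 < t) :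
    |-2 * t * s / (t ^ 2 + s ^ 2) ^ 2| ≤ (t ^ 2 + s ^ 2)⁻¹ :=
  calc |-2 * t * s / (t ^ 2 + s ^ 2) ^ 2| = |-2 * t * s| / (t ^ 2 + s ^ 2) ^ 2 := by
        rw [abs_div, abs_of_pos (by positivity : 0 < (t ^ 2 + s ^ 2) ^ 2)]
    _ ≤ (t ^ 2 + s ^ 2) / (t ^ 2 + s ^ 2) ^ 2 := by
        gcongr; exact abs_le.2 ⟨by nlinarith [sq_nonneg (t - s)], by nlinarith [sq_nonneg (t + s)]⟩
    _ = (t ^ 2 + s ^ 2)⁻¹ := by field_simp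

lemma inv_sq_add_sq_le {a : ℝ} (ha : 0 < a) (hat : a ≤ t) :
    (t ^ 2 + s ^ 2)⁻¹ ≤ max 1 (a ^ 2)⁻¹ * (1 + s ^ 2)⁻¹ := by
  set M := max 1 (a ^ 2)⁻¹
  have h₁ : 1 ≤ M * a ^ 2 :=
    calc 1 = (a ^ 2)⁻¹ * a ^ 2 := (inv_mul_cancel₀ (by positivity)).symm
      _ ≤ M * a ^ 2 := by gcongr; exact le_max_right _ _
  have h₂ : s ^ 2 ≤ M * s ^ 2 := le_mul_of_one_le_left (sq_nonneg s) (le_max_left _ _)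
  calc (t ^ 2 + s ^ 2)⁻¹ ≤ (a ^ 2 + s ^ 2)⁻¹ := by gcongr
    _ ≤ M * (1 + s ^ 2)⁻¹ := by
        rw [← div_eq_mul_inv, le_div_iff₀ (by positivity), inv_mul_le_iff₀ (by positivity)]
        linarith

lemma exists_cauchyKernel_bound (ht : 0 < t) : ∃ C, ∀ τ ∈ ball t (t / 2), ∀ s,
    |cauchyKernel τ s| ≤ C * (1 + s ^ 2)⁻¹ ∧ |cauchyKernel' τ s| ≤ C * (1 + s ^ 2)⁻¹ ∧
      |cauchyKernel'' τ s| ≤ C * (1 + s ^ 2)⁻¹ := by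
  set K := 2 * t + 1 + 12 / t
  refine ⟨K * max 1 ((t / 2) ^ 2)⁻¹, fun τ hτ s => ?_⟩
  rw [mem_ball, Real.dist_eq, abs_lt] at hτ
  have hτ₀ : 0 < τ := by linarith
  have hB := inv_sq_add_sq_le (s := s) (half_pos ht) (by linarith : t / 2 ≤ τ)
  have hscale : ∀ c, 0 ≤ c → c ≤ K →
      c * (τ ^ 2 + s ^ 2)⁻¹ ≤ K * max 1 ((t / 2) ^ 2)⁻¹ * (1 + s ^ 2)⁻¹ := fun c hc hcK =>
    calc c * (τ ^ 2 + s ^ 2)⁻¹ ≤ K * (max 1 ((t / 2) ^ 2)⁻¹ * (1 + s ^ 2)⁻¹) :=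
          mul_le_mul hcK hB (by positivity) (by positivity)
      _ = _ := by ring
  have h12 : 6 / τ ≤ 12 / t := by
    rw [div_le_div_iff₀ hτ₀ ht]; linarith
  refine ⟨?_, ?_, ?_⟩
  · rw [cauchyKernel, abs_of_pos (by positivity), div_eq_mul_inv]
    exact hscale τ hτ₀.le (by linarith [show 0 < 12 / t by positivity])
  · exact (abs_cauchyKernel'_le hτ₀).trans
      (by simpa using hscale 1 zero_le_one (by linarith [show 0 < 12 / t by positivity]))
  · exact (abs_cauchyKernel''_le hτ₀).trans (hscale _ (by positivity) (by linarith))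

end CauchyKernel

section HeatKernelIntegral

variable {β q : ℝ}

lemma integrableOn_heatKernel_mul (hq : 0 < q) (hβ : 0 ≤ β) {k : ℝ → ℝ} (hk : Measurable k)
    {C : ℝ} (hb : ∀ s, |k s| ≤ C * (1 + s ^ 2)⁻¹) :
    IntegrableOn (fun s => heatKernel β q s * k s) (Ioi 0) := by
  obtain ⟨M, hM⟩ := exists_heatKernel_le hq hβ
  refine Integrable.mono' ((integrable_inv_one_add_sq.const_mul (M * C)).integrableOn)
    (measurable_heatKernel.mul hk).aestronglyMeasurable
    (ae_restrict_of_forall_mem measurableSet_Ioi fun s (hs : 0 < s) => ?_)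
  rw [norm_mul, Real.norm_of_nonneg (heatKernel_pos hs).le, Real.norm_eq_abs, mul_assoc]
  exact mul_le_mul (hM s hs) (hb s) (abs_nonneg _) ((heatKernel_pos hs).le.trans (hM s hs))

lemma hasDerivAt_integral_heatKernel_mul_q (hq : 0 < q) (hβ : 0 ≤ β) {k : ℝ → ℝ}
    (hk : Measurable k) {C : ℝ} (hb : ∀ s, |k s| ≤ C * (1 + s ^ 2)⁻¹) :
    HasDerivAt (fun r => ∫ s in Ioi 0, heatKernel β r s * k s)
      (-(1 / 2) * ∫ s in Ioi 0, heatKernel (β + 1) q s * k s) q := by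
  have hbound : IntegrableOn (fun s => 1 / 2 * (heatKernel (β + 1) (q / 2) s * |k s|)) (Ioi 0) :=
    (integrableOn_heatKernel_mul (half_pos hq) (by linarith) hk.abs
      (by simpa only [abs_abs] using hb)).const_mul _
  rw [← integral_const_mul]
  refine (hasDerivAt_integral_of_dominated_loc_of_deriv_le (Ioi_mem_nhds (half_lt_self hq))
    (F := fun r s => heatKernel β r s * k s)
    (F' := fun r s => -(1 / 2) * (heatKernel (β + 1) r s * k s))
    (.of_forall fun r => (measurable_heatKernel.mul hk).aestronglyMeasurable)
    (integrableOn_heatKernel_mul hq hβ hk hb)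
    ((measurable_heatKernel.mul hk).const_mul _).aestronglyMeasurable
    (ae_restrict_of_forall_mem measurableSet_Ioi fun s (hs : 0 < s) r (hr : q / 2 < r) => ?_)
    hbound
    (ae_restrict_of_forall_mem measurableSet_Ioi fun s (hs : 0 < s) r _ => ?_)).2
  · rw [norm_mul, norm_mul, Real.norm_of_nonneg (heatKernel_pos hs).le, Real.norm_eq_abs,
      Real.norm_eq_abs, abs_neg, abs_of_pos one_half_pos]
    gcongr
    exact heatKernel_le_of_le_q hs hr.le
  · simpa [mul_assoc] using (hasDerivAt_heatKernel_q hs).mul_const (k s)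

lemma hasDerivAt_integral_heatKernel_mul_t (hq : 0 < q) (hβ : 0 ≤ β) {k k' : ℝ → ℝ → ℝ}
    {t C : ℝ} {U : Set ℝ} (hU : U ∈ 𝓝 t) (hk : ∀ τ, Measurable (k τ)) (hk' : Measurable (k' t))
    (hkb : ∀ s, |k t s| ≤ C * (1 + s ^ 2)⁻¹) (hk'b : ∀ τ ∈ U, ∀ s, |k' τ s| ≤ C * (1 + s ^ 2)⁻¹)
    (hderiv : ∀ τ ∈ U, ∀ s, 0 < s → HasDerivAt (fun τ => k τ s) (k' τ s) τ) :
    HasDerivAt (fun τ => ∫ s in Ioi 0, heatKernel β q s * k τ s)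
      (∫ s in Ioi 0, heatKernel β q s * k' t s) t := by
  refine (hasDerivAt_integral_of_dominated_loc_of_deriv_le hU
    (F := fun τ s => heatKernel β q s * k τ s) (F' := fun τ s => heatKernel β q s * k' τ s)
    (.of_forall fun τ => (measurable_heatKernel.mul (hk τ)).aestronglyMeasurable)
    (integrableOn_heatKernel_mul hq hβ (hk t) hkb)
    (measurable_heatKernel.mul hk').aestronglyMeasurable
    (ae_restrict_of_forall_mem measurableSet_Ioi fun s (hs : 0 < s) τ hτ => ?_)
    (integrableOn_heatKernel_mul (k := fun s => C * (1 + s ^ 2)⁻¹) (C := |C|) hq hβ (by fun_prop)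
      fun s => by rw [abs_mul, abs_of_pos (by positivity : (0 : ℝ) < (1 + s ^ 2)⁻¹)])
    (ae_restrict_of_forall_mem measurableSet_Ioi fun s (hs : 0 < s) τ hτ =>
      (hderiv τ hτ s hs).const_mul _)).2
  rw [norm_mul, Real.norm_of_nonneg (heatKernel_pos hs).le, Real.norm_eq_abs]
  exact mul_le_mul_of_nonneg_left (hk'b τ hτ s) (heatKernel_pos hs).le

end HeatKernelIntegral

noncomputable def heatCauchyIntegral (β q t : ℝ) : ℝ :=
  ∫ s in Ioi 0, heatKernel β q s * cauchyKernel t s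

section HeatCauchyIntegral

variable {β q t : ℝ}

lemma hasDerivAt_heatCauchyIntegral_q (hq : 0 < q) (hβ : 0 ≤ β) (ht : 0 < t) :
    HasDerivAt (fun r => heatCauchyIntegral β r t) (-(1 / 2) * heatCauchyIntegral (β + 1) q t) q :=
  have ⟨_, hC⟩ := exists_cauchyKernel_bound ht
  hasDerivAt_integral_heatKernel_mul_q hq hβ (measurable_cauchyKernel t)
    fun s => (hC t (mem_ball_self (half_pos ht)) s).1

lemma iteratedDeriv_two_heatCauchyIntegral_t (c : ℝ) (hq : 0 < q) (hβ : 0 ≤ β) (ht : 0 < t) :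
    iteratedDeriv 2 (fun τ => c * heatCauchyIntegral β q τ) t
      = c * ∫ s in Ioi 0, heatKernel β q s * cauchyKernel'' t s := by
  obtain ⟨C, hC⟩ := exists_cauchyKernel_bound ht
  have hball : ball t (t / 2) ∈ 𝓝 t := ball_mem_nhds t (half_pos ht)
  refine iteratedDeriv_two_eq_of_hasDerivAt
    (f' := fun τ => c * ∫ s in Ioi 0, heatKernel β q s * cauchyKernel' τ s)
    (Filter.mem_of_superset hball fun τ hτ => ?_) ?_
  · exact (hasDerivAt_integral_heatKernel_mul_t hq hβ (isOpen_ball.mem_nhds hτ)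
      measurable_cauchyKernel (measurable_cauchyKernel' τ) (fun s => (hC τ hτ s).1)
      (fun τ' hτ' s => (hC τ' hτ' s).2.1)
      fun τ' _ s hs => hasDerivAt_cauchyKernel_t (by positivity)).const_mul c
  · exact (hasDerivAt_integral_heatKernel_mul_t hq hβ hball
      measurable_cauchyKernel' (measurable_cauchyKernel'' t)
      (fun s => (hC t (mem_ball_self (half_pos ht)) s).2.1) (fun τ hτ s => (hC τ hτ s).2.2)
      fun τ _ s hs => hasDerivAt_cauchyKernel'_t (by positivity)).const_mul c

/-- The boundary term `(∂ₛ G) P - G (∂ₛ P)` of the double integration by parts in `s`. -/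
noncomputable def heatCauchyWronskian (β q t s : ℝ) : ℝ :=
  (q / 2 * heatKernel (β + 2) q s - β * heatKernel (β + 1) q s) * cauchyKernel t s
    - heatKernel β q s * (-2 * t * s / (t ^ 2 + s ^ 2) ^ 2)

lemma hasDerivAt_heatCauchyWronskian {s : ℝ} (hs : 0 < s) :
    HasDerivAt (heatCauchyWronskian β q t)
      (q ^ 2 / 4 * (heatKernel (β + 4) q s * cauchyKernel t s)
        - q * (β + 1) * (heatKernel (β + 3) q s * cauchyKernel t s)
        + β * (β + 1) * (heatKernel (β + 2) q s * cauchyKernel t s)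
        + heatKernel β q s * cauchyKernel'' t s) s :=
  ((hasDerivAt_heatKernel_s_deriv hs).mul (hasDerivAt_cauchyKernel_s (by positivity))).sub
    ((hasDerivAt_heatKernel_s hs).mul (hasDerivAt_cauchyKernel_s_deriv (by positivity)))
    |>.congr_deriv (by ring)

lemma tendsto_heatCauchyWronskian_nhdsGT_zero (hq : 0 < q) (ht : t ≠ 0) :
    Tendsto (heatCauchyWronskian β q t) (𝓝[>] 0) (𝓝 0) := by
  have hP : Tendsto (cauchyKernel t) (𝓝[>] 0) (𝓝 (cauchyKernel t 0)) :=
    (hasDerivAt_cauchyKernel_s (by positivity)).continuousAt.tendsto.mono_left nhdsWithin_le_nhds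
  have hP' : Tendsto (fun s => -2 * t * s / (t ^ 2 + s ^ 2) ^ 2) (𝓝[>] 0)
      (𝓝 (-2 * t * 0 / (t ^ 2 + 0 ^ 2) ^ 2)) :=
    (hasDerivAt_cauchyKernel_s_deriv (by positivity)).continuousAt.tendsto.mono_left
      nhdsWithin_le_nhds
  unfold heatCauchyWronskian
  simpa using ((((tendsto_heatKernel_nhdsGT_zero (β := β + 2) hq).const_mul (q / 2)).sub
    ((tendsto_heatKernel_nhdsGT_zero (β := β + 1) hq).const_mul β)).mul hP).sub
    ((tendsto_heatKernel_nhdsGT_zero (β := β) hq).mul hP')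

lemma tendsto_heatCauchyWronskian_atTop (hβ : 0 < β) (ht : 0 < t) :
    Tendsto (heatCauchyWronskian β q t) atTop (𝓝 0) := by
  obtain ⟨C, hC⟩ := exists_cauchyKernel_bound ht
  have hP : Tendsto (cauchyKernel t) atTop (𝓝 0) :=
    tendsto_atTop_zero_of_abs_le fun s => (hC t (mem_ball_self (half_pos ht)) s).1
  have hP' : Tendsto (fun s => -2 * t * s / (t ^ 2 + s ^ 2) ^ 2) atTop (𝓝 0) :=
    tendsto_atTop_zero_of_abs_le fun s =>
      (abs_deriv_cauchyKernel_s_le ht).trans (inv_sq_add_sq_le ht le_rfl)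
  unfold heatCauchyWronskian
  simpa using ((((tendsto_heatKernel_atTop (β := β + 2) (q := q) (by linarith)).const_mul
    (q / 2)).sub ((tendsto_heatKernel_atTop (β := β + 1) (q := q) (by linarith)).const_mul β)).mul
    hP).sub ((tendsto_heatKernel_atTop (q := q) hβ).mul hP')

/-- Integrating by parts twice in `s`, the heat equation for `heatKernel` and the harmonicity of
`cauchyKernel` trade `∂²ₜ` for the second `s`-derivative of the heat kernel. -/
lemma integral_heatKernel_mul_cauchyKernel'' (hq : 0 < q) (hβ : 0 < β) (ht : 0 < t) :
    ∫ s in Ioi 0, heatKernel β q s * cauchyKernel'' t s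
      = -(q ^ 2 / 4 * heatCauchyIntegral (β + 4) q t
        - q * (β + 1) * heatCauchyIntegral (β + 3) q t
        + β * (β + 1) * heatCauchyIntegral (β + 2) q t) := by
  obtain ⟨C, hC⟩ := exists_cauchyKernel_bound ht
  have hCt := hC t (mem_ball_self (half_pos ht))
  have hint : ∀ k : ℝ, 0 ≤ k →
      IntegrableOn (fun s => heatKernel (β + k) q s * cauchyKernel t s) (Ioi 0) := fun k hk =>
    integrableOn_heatKernel_mul hq (by linarith) (measurable_cauchyKernel t) fun s => (hCt s).1
  have hint₄ := (hint 4 (by norm_num)).const_mul (q ^ 2 / 4)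
  have hint₃ := (hint 3 (by norm_num)).const_mul (q * (β + 1))
  have hint₂ := (hint 2 (by norm_num)).const_mul (β * (β + 1))
  have hint'' : IntegrableOn (fun s => heatKernel β q s * cauchyKernel'' t s) (Ioi 0) :=
    integrableOn_heatKernel_mul hq hβ.le (measurable_cauchyKernel'' t) fun s => (hCt s).2.2
  have hibp := integral_Ioi_eq_sub_of_hasDerivAt_of_tendsto_nhdsGT
    (fun s hs => hasDerivAt_heatCauchyWronskian hs) (((hint₄.sub hint₃).add hint₂).add hint'')
    (tendsto_heatCauchyWronskian_nhdsGT_zero hq ht.ne') (tendsto_heatCauchyWronskian_atTop hβ ht)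
  rw [integral_add ?_ hint'', integral_add ?_ hint₂, integral_sub hint₄ hint₃, integral_const_mul,
    integral_const_mul, integral_const_mul] at hibp
  · simp only [heatCauchyIntegral]
    linarith
  · exact hint₄.sub hint₃
  · exact (hint₄.sub hint₃).add hint₂

end HeatCauchyIntegral

lemma laplacian_laplacian_heatCauchyIntegral {d : ℕ} {β t : ℝ} (c : ℝ) (hβ : 0 ≤ β) (ht : 0 < t)
    {x : Fin d → ℝ} (hx : 0 < ∑ j, x j ^ 2) :
    laplacian (fun y => laplacian (fun z => c * heatCauchyIntegral β (∑ j, z j ^ 2) t) y) x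
      = c * (d * (d + 2) * heatCauchyIntegral (β + 2) (∑ j, x j ^ 2) t
        - 2 * (d + 2) * (∑ j, x j ^ 2) * heatCauchyIntegral (β + 3) (∑ j, x j ^ 2) t
        + (∑ j, x j ^ 2) ^ 2 * heatCauchyIntegral (β + 4) (∑ j, x j ^ 2) t) := by
  have h := laplacian_laplacian_comp_sum_sq
    (φ := fun k r => c * (-(1 / 2)) ^ k * heatCauchyIntegral (β + k) r t)
    (fun k _ r hr => ((hasDerivAt_heatCauchyIntegral_q hr (by positivity) ht).const_mul _
      ).congr_deriv (by push_cast; rw [← add_assoc]; ring)) hx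
  simp only [pow_zero, mul_one, Nat.cast_zero, add_zero, Nat.cast_ofNat] at h
  rw [h]
  ring

lemma bmCauchyDensityVec_eq (d : ℕ) (x : Fin d → ℝ) (t : ℝ) :
    bmCauchyDensityVec d x t
      = 2 / π * (2 * π) ^ (-((d : ℝ) / 2)) * heatCauchyIntegral ((d : ℝ) / 2) (∑ j, x j ^ 2) t := by
  rw [bmCauchyDensityVec, heatCauchyIntegral, mul_assoc]
  congr 1
  rw [← integral_const_mul]
  refine setIntegral_congr_fun measurableSet_Ioi fun s (hs : 0 < s) => ?_
  have hsqrt : sqrt (2 * π * s) ^ d = (2 * π) ^ ((d : ℝ) / 2) * s ^ ((d : ℝ) / 2) := by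
    rw [sqrt_eq_rpow, ← rpow_natCast, ← rpow_mul (by positivity), mul_rpow (by positivity) hs.le]
    ring_nf
  rw [Finset.prod_div_distrib, ← exp_sum, Finset.prod_const, Finset.card_univ, Fintype.card_fin,
    hsqrt, heatKernel, cauchyKernel, ← Finset.sum_div, ← Finset.sum_neg_distrib,
    rpow_neg (by positivity), rpow_neg hs.le]
  field_simp

/-- Away from the origin, the joint density of `(B₁(|C(t)|), ..., B_d(|C(t)|))` satisfies
`∂²p/∂t² = −(1/4)(∑_j ∂²/∂x_j²)² p`, i.e. the biharmonic operator applied to `p`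
equals `−4 ∂²p/∂t²`. -/
theorem bmCauchyDensityVec_pde (d : ℕ) (hd : 1 ≤ d) :
    ∀ (x : Fin d → ℝ) (t : ℝ), x ≠ 0 → 0 < t →
      iteratedDeriv 2 (fun τ => bmCauchyDensityVec d x τ) t
          = -(1 / 4) * laplacian (fun y => laplacian (fun z => bmCauchyDensityVec d z t) y) x
        ∧ laplacian (fun y => laplacian (fun z => bmCauchyDensityVec d z t) y) x
          = -4 * iteratedDeriv 2 (fun τ => bmCauchyDensityVec d x τ) t := by
  intro x t hx ht
  have hq : 0 < ∑ j, x j ^ 2 := by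
    obtain ⟨j, hj⟩ := Function.ne_iff.1 hx
    have : x j ≠ 0 := hj
    exact Finset.sum_pos' (fun i _ => sq_nonneg (x i)) ⟨j, Finset.mem_univ j, by positivity⟩
  have hβ : 0 < (d : ℝ) / 2 := by
    have : (1 : ℝ) ≤ d := by exact_mod_cast hd
    positivity
  have htime : iteratedDeriv 2 (fun τ => bmCauchyDensityVec d x τ) t
      = 2 / π * (2 * π) ^ (-((d : ℝ) / 2))
        * ∫ s in Ioi 0, heatKernel ((d : ℝ) / 2) (∑ j, x j ^ 2) s * cauchyKernel'' t s := by
    simp only [bmCauchyDensityVec_eq]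
    exact iteratedDeriv_two_heatCauchyIntegral_t _ hq hβ.le ht
  have hspace := laplacian_laplacian_heatCauchyIntegral (2 / π * (2 * π) ^ (-((d : ℝ) / 2))) hβ.le
    ht hq
  simp only [← bmCauchyDensityVec_eq] at hspace
  rw [htime, hspace, integral_heatKernel_mul_cauchyKernel'' hq hβ ht]
  constructor <;> ring
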